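/- Let C be a Type II Z4-code of length n ≡ 0 (mod 8). Then the lattice A4(C) = (1/2){ x in Z^n : (x mod 4) in C } is an even unimodular lattice in R^n (of rank n, integral, even, and self-dual). -/
import Mathlib


open Finset

/-- Euclidean weight of a vector over `ZMod 4`: `n1 + 4*n2 + n3`. -/
def euclWt {n : ℕ} (x : Fin n → ZMod 4) : ℕ :=
  (univ.filter fun i => x i = 1).card + 4 * (univ.filter fun i => x i = 2).card
    + (univ.filter fun i => x i = 3).card

/-- A `ZMod 4`-code is self-dual if it equals its dual under the standard inner product. -/
def IsSelfDualZ4 {n : ℕ} (C : Submodule (ZMod 4) (Fin n → ZMod 4)) : Prop :=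
  ∀ x, x ∈ C ↔ ∀ y ∈ C, ∑ i, x i * y i = 0

/-- reduction mod 2 -/
def res : ZMod 4 →+* ZMod 2 := ZMod.castHom (by norm_num : (2:ℕ) ∣ 4) (ZMod 2)

/-- The lattice `A₄(C) = (1/2){x ∈ ℤⁿ : x mod 4 ∈ C}`, as a subset of `ℝⁿ`. -/
def A4 {n : ℕ} (C : Submodule (ZMod 4) (Fin n → ZMod 4)) : Set (Fin n → ℝ) :=
  {y | ∃ x : Fin n → ℤ, (∀ i, y i = (x i : ℝ) / 2) ∧ (fun i => (x i : ZMod 4)) ∈ C}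

def fwt : ZMod 4 → ℕ := fun a => if a = 1 then 1 else if a = 2 then 4 else if a = 3 then 1 else 0

lemma euclWt_eq {n : ℕ} (x : Fin n → ZMod 4) : euclWt x = ∑ i, fwt (x i) := by
  unfold euclWt
  simp only [Finset.card_filter, Finset.mul_sum, ← Finset.sum_add_distrib]
  refine Finset.sum_congr rfl fun i _ => ?_
  generalize x i = a
  revert a; decide

lemma sq_mod8 (a : ℤ) : ((a : ZMod 8)) * ((a : ZMod 8)) = ((fwt (a : ZMod 4) : ℕ) : ZMod 8) := by
  have h : ∀ b : ZMod 8, b * b =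
      ((fwt ((ZMod.castHom (by norm_num : (4:ℕ) ∣ 8) (ZMod 4)) b) : ℕ) : ZMod 8) := by decide
  have h2 := h (a : ZMod 8)
  rwa [map_intCast] at h2

/-- key divisibility from self-duality -/
lemma key4 {n : ℕ} {C : Submodule (ZMod 4) (Fin n → ZMod 4)} (hsd : IsSelfDualZ4 C)
    {x y : Fin n → ℤ} (hx : (fun i => (x i : ZMod 4)) ∈ C)
    (hy : (fun i => (y i : ZMod 4)) ∈ C) : (4 : ℤ) ∣ ∑ i, x i * y i := by
  have h := ((hsd _).1 hx) _ hy
  have h0 : ((∑ i, x i * y i : ℤ) : ZMod 4) = 0 := by push_cast; exact h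
  exact_mod_cast (ZMod.intCast_zmod_eq_zero_iff_dvd _ 4).1 h0

/-- lift of a codeword to ℤ -/
lemma lift_code {n : ℕ} (c : Fin n → ZMod 4) :
    ∃ y : Fin n → ℤ, (fun i => ((y i : ℤ) : ZMod 4)) = c := by
  refine ⟨fun i => ((c i).val : ℤ), funext fun i => ?_⟩
  push_cast
  simp [ZMod.natCast_val, ZMod.cast_id]

lemma even_key {n : ℕ} {C : Submodule (ZMod 4) (Fin n → ZMod 4)}
    (hII : ∀ x ∈ C, 8 ∣ euclWt x) {x : Fin n → ℤ}
    (hx : (fun i => (x i : ZMod 4)) ∈ C) : (8 : ℤ) ∣ ∑ i, x i * x i := by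
  obtain ⟨k, hk⟩ := hII _ hx
  have h0 : ((∑ i, x i * x i : ℤ) : ZMod 8) = 0 := by
    push_cast
    rw [Finset.sum_congr rfl fun i _ => sq_mod8 (x i)]
    have he : ∑ i, ((fwt ((x i : ZMod 4)) : ℕ) : ZMod 8)
        = ((euclWt (fun i => (x i : ZMod 4)) : ℕ) : ZMod 8) := by
      rw [euclWt_eq]; push_cast; ring
    rw [he, hk]
    have h80 : (8 : ZMod 8) = 0 := by decide
    push_cast
    rw [h80]; ring
  exact_mod_cast (ZMod.intCast_zmod_eq_zero_iff_dvd _ 8).1 h0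

/-- For a Type II `ZMod 4`-code of length `n ≡ 0 (mod 8)`, the lattice `A₄(C)`
is an even unimodular lattice of rank `n`: it spans `ℝⁿ`, all inner products are
integers, all norms are even integers, and it is self-dual. -/
theorem stmt8 {n : ℕ} (hn : n % 8 = 0) (C : Submodule (ZMod 4) (Fin n → ZMod 4))
    (hsd : IsSelfDualZ4 C) (hII : ∀ x ∈ C, 8 ∣ euclWt x) :
    Submodule.span ℝ (A4 C) = ⊤ ∧
    (∀ u ∈ A4 C, ∀ v ∈ A4 C, ∃ m : ℤ, ∑ i, u i * v i = (m : ℝ)) ∧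
    (∀ u ∈ A4 C, ∃ m : ℤ, ∑ i, u i * u i = ((2 * m : ℤ) : ℝ)) ∧
    (∀ v : Fin n → ℝ, v ∈ A4 C ↔
      ∀ u ∈ A4 C, ∃ m : ℤ, ∑ i, v i * u i = (m : ℝ)) := by
  -- the doubled standard basis vectors
  set U : Fin n → (Fin n → ℝ) := fun j i => if i = j then 2 else 0 with hU
  have hUmem : ∀ j, U j ∈ A4 C := by
    intro j
    refine ⟨fun i => if i = j then 4 else 0, fun i => ?_, ?_⟩
    · by_cases h : i = j <;> simp [hU, h] <;> norm_num
    · have : (fun i => (((if i = j then 4 else 0 : ℤ)) : ZMod 4)) = 0 := by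
        funext i; by_cases h : i = j <;> simp [h] <;> decide
      rw [this]; exact C.zero_mem
  -- integrality
  have hint : ∀ u ∈ A4 C, ∀ v ∈ A4 C, ∃ m : ℤ, ∑ i, u i * v i = (m : ℝ) := by
    rintro u ⟨x, hxu, hx⟩ v ⟨y, hyv, hy⟩
    obtain ⟨m, hm⟩ := key4 hsd hx hy
    refine ⟨m, ?_⟩
    have : ∑ i, u i * v i = (∑ i, x i * y i : ℤ) / 4 := by
      push_cast
      rw [Finset.sum_div]
      exact Finset.sum_congr rfl fun i _ => by rw [hxu, hyv]; ring
    rw [this, hm]; push_cast; ring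
  refine ⟨?_, hint, ?_, ?_⟩
  · -- spanning
    rw [eq_top_iff]
    rintro v -
    rw [pi_eq_sum_univ v]
    refine Submodule.sum_mem _ fun j _ => Submodule.smul_mem _ _ ?_
    have he : (fun i => if j = i then (1:ℝ) else 0) = (2⁻¹ : ℝ) • U j := by
      funext i; by_cases h : i = j <;> simp [hU, h, eq_comm] <;> norm_num
    rw [he]
    exact Submodule.smul_mem _ _ (Submodule.subset_span (hUmem j))
  · -- evenness
    rintro u ⟨x, hxu, hx⟩
    obtain ⟨m, hm⟩ := even_key hII hx
    refine ⟨m, ?_⟩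
    have : ∑ i, u i * u i = (∑ i, x i * x i : ℤ) / 4 := by
      push_cast
      rw [Finset.sum_div]
      exact Finset.sum_congr rfl fun i _ => by rw [hxu]; ring
    rw [this, hm]; push_cast; ring
  · -- self-duality
    intro v
    constructor
    · intro hv u hu; exact hint v hv u hu
    · intro hv
      -- v has half-integer coordinates
      have hz : ∀ j, ∃ m : ℤ, v j = (m : ℝ) / 2 := by
        intro j
        obtain ⟨m, hm⟩ := hv (U j) (hUmem j)
        refine ⟨m, ?_⟩
        have : ∑ i, v i * U j i = v j * 2 := by
          rw [hU]
          simp [mul_ite, Finset.sum_ite_eq']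
        rw [this] at hm; linarith
      choose z hzv using hz
      refine ⟨z, hzv, ?_⟩
      rw [hsd]
      intro c hc
      obtain ⟨y, hy⟩ := lift_code c
      have hymem : (fun i => ((y i : ℤ) : ZMod 4)) ∈ C := hy ▸ hc
      obtain ⟨m, hm⟩ := hv (fun i => (y i : ℝ) / 2) ⟨y, fun i => rfl, hymem⟩
      have h4 : (∑ i, z i * y i : ℤ) = 4 * m := by
        have : ((∑ i, z i * y i : ℤ) : ℝ) = ((4 * m : ℤ) : ℝ) := by
          push_cast
          rw [show (4 : ℝ) * m = 4 * ∑ i, v i * ((y i : ℝ) / 2) by rw [hm]]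
          rw [Finset.mul_sum]
          exact Finset.sum_congr rfl fun i _ => by rw [hzv i]; ring
        exact_mod_cast this
      have hzero : ((∑ i, z i * y i : ℤ) : ZMod 4) = 0 := by
        rw [h4]
        have h40 : (4 : ZMod 4) = 0 := by decide
        push_cast
        rw [h40]; ring
      rw [← hy]
      push_cast at hzero
      simpa using hzero
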